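/- Let k, 𝒪_k, ϖ be as usual (complete non-archimedean field, 0 < |ϖ| < 1), let R = k[T,T⁻¹,Z]/(Z²) and R₀ the 𝒪_k-submodule with basis ϖ^{|n|}Tⁿ and ϖ^{-|n|}TⁿZ (n ∈ ℤ). Then for every n ≥ 0: ϖ⁻ⁿZ ∈ R₀[T] and ϖ⁻ⁿZ ∈ R₀[T⁻¹], but ϖ⁻¹Z ∉ R₀. Consequently the image of Z is zero in the completions of R with respect to R₀[T] and R₀[T⁻¹], but nonzero in the completion of R with respect to R₀. -/

import Mathlib

open Pointwise

/-- The valuation ring `𝒪_k = {c : k | ‖c‖ ≤ 1}` of a non-archimedean normed field. -/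
def valuationSubring (k : Type*) [NormedField k] [IsUltrametricDist k] : Subring k where
  carrier := {c | ‖c‖ ≤ 1}
  one_mem' := by simp
  zero_mem' := by simp
  neg_mem' := by simp
  mul_mem' := by
    intro a b ha hb
    simp only [Set.mem_setOf_eq] at *
    calc ‖a * b‖ = ‖a‖ * ‖b‖ := norm_mul a b
      _ ≤ 1 * 1 := mul_le_mul ha hb (norm_nonneg b) zero_le_one
      _ = 1 := one_mul 1
  add_mem' := by
    intro a b ha hb
    simp only [Set.mem_setOf_eq] at *
    exact le_trans (IsUltrametricDist.norm_add_le_max a b) (max_le ha hb)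

/-!
The `k`-linear functional "coefficient of `T⁰ Z`" has norm at most `1` on the generators of
`R₀`, hence, by the ultrametric inequality, on all of `R₀`; but it takes the value `ϖ⁻¹` at
`ϖ⁻¹ Z`. On the other hand `T^{±n} · ϖ^{-n} T^{∓n} Z = ϖ^{-n} Z`, so `Z` becomes infinitely
`ϖ`-divisible as soon as `T` or `T⁻¹` is adjoined to `R₀`.
-/

open TrivSqZeroExt LaurentPolynomial

theorem norm_le_one_of_mem_span {k M : Type*} [NormedField k] [IsUltrametricDist k]
    [AddCommGroup M] [Module k M] (f : M →ₗ[k] k) {s : Set M} (hs : ∀ x ∈ s, ‖f x‖ ≤ 1)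
    {x : M} (hx : x ∈ Submodule.span (valuationSubring k) s) : ‖f x‖ ≤ 1 := by
  induction hx using Submodule.span_induction with
  | mem x hx => exact hs x hx
  | zero => simp
  | add x y _ _ hx hy =>
    rw [map_add]
    exact (IsUltrametricDist.norm_add_le_max _ _).trans (max_le hx hy)
  | smul c x _ hx =>
    rw [Subring.smul_def, map_smul, smul_eq_mul, norm_mul]
    exact mul_le_one₀ c.2 (norm_nonneg _) hx

theorem mem_iInter_pow_smul_iff {G M : Type*} [GroupWithZero G] [MulAction G M] {ϖ : G}
    (hϖ : ϖ ≠ 0) {s : Set M} {x : M} :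
    x ∈ ⋂ n : ℕ, ϖ ^ n • s ↔ ∀ n : ℕ, ϖ⁻¹ ^ n • x ∈ s := by
  simp only [Set.mem_iInter, Set.mem_smul_set_iff_inv_smul_mem₀ (pow_ne_zero _ hϖ), inv_pow]

section DualLaurent

variable {k : Type*} [CommRing k]

variable (k) in
/-- The coefficient of `T⁰ Z` in `k[T, T⁻¹, Z]/(Z²)`. -/
def constCoeffSnd : DualNumber (LaurentPolynomial k) →ₗ[k] k where
  toFun x := x.snd.coeff 0
  map_add' x y := by simp
  map_smul' c x := by simp

@[simp]
theorem constCoeffSnd_inl (p : LaurentPolynomial k) :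
    constCoeffSnd k (inl p) = 0 := rfl

@[simp]
theorem constCoeffSnd_inr (p : LaurentPolynomial k) :
    constCoeffSnd k (inr p) = p.coeff 0 := rfl

theorem inl_T_pow_mul_inr_T (m : ℤ) (n : ℕ) (j : ℤ) :
    (inl (T m) : DualNumber (LaurentPolynomial k)) ^ n * inr (T j) = inr (T (m * n + j)) := by
  rw [inl_pow, T_pow, inl_mul_inr, smul_eq_mul, ← T_add, mul_comm]

end DualLaurent

section Generators

variable {k : Type*} [Field k]

/-- The `𝒪_k`-basis `ϖ^|n| Tⁿ, ϖ^(-|n|) Tⁿ Z` of `R₀`. -/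
def rostGenerators (ϖ : k) : Set (DualNumber (LaurentPolynomial k)) :=
  (Set.range fun n : ℤ => (ϖ ^ n.natAbs) • inl (T n)) ∪
    (Set.range fun n : ℤ => (ϖ⁻¹ ^ n.natAbs) • inr (M := LaurentPolynomial k) (T n))

/-- `T^{±n}` cancels the `T`-power of the generator `ϖ^{-n} T^{∓n} Z`. -/
theorem inv_pow_smul_inr_one_mem {ϖ : k} {m : ℤ} (hm : m.natAbs = 1)
    {S : Subring (DualNumber (LaurentPolynomial k))} (hT : inl (T m) ∈ S)
    (hgen : ∀ j : ℤ, ϖ⁻¹ ^ j.natAbs • inr (T j) ∈ S) (n : ℕ) :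
    ϖ⁻¹ ^ n • inr 1 ∈ S := by
  have h := S.mul_mem (S.pow_mem hT n) (hgen (-(m * n)))
  rwa [mul_smul_comm, inl_T_pow_mul_inr_T, add_neg_cancel, T_zero, Int.natAbs_neg,
    Int.natAbs_mul, hm, one_mul, Int.natAbs_natCast] at h

end Generators

section Lattice

variable {k : Type*} [NormedField k]

theorem norm_constCoeffSnd_rostGenerators_le_one (ϖ : k) :
    ∀ x ∈ rostGenerators ϖ, ‖constCoeffSnd k x‖ ≤ 1 := by
  rintro _ (⟨n, rfl⟩ | ⟨n, rfl⟩)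
  · simp only [map_smul, constCoeffSnd_inl, smul_zero, norm_zero, zero_le_one]
  · rw [map_smul, constCoeffSnd_inr, T_apply]
    split_ifs with hn
    · simp [hn]
    · simp

theorem inv_smul_inr_one_notMem_span [IsUltrametricDist k] {ϖ : k} (hϖ0 : ϖ ≠ 0)
    (hϖ1 : ‖ϖ‖ < 1) :
    ϖ⁻¹ • inr 1 ∉ Submodule.span (valuationSubring k) (rostGenerators ϖ) := by
  intro h
  have h' := norm_le_one_of_mem_span _ (norm_constCoeffSnd_rostGenerators_le_one ϖ) h
  rw [map_smul, constCoeffSnd_inr, ← T_zero, T_apply, if_pos rfl, smul_eq_mul, mul_one,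
    norm_inv] at h'
  exact h'.not_gt ((one_lt_inv₀ (norm_pos_iff.mpr hϖ0)).mpr hϖ1)

end Lattice

theorem rost_example_not_sheaf_general
    (k : Type*) [NontriviallyNormedField k] [IsUltrametricDist k]
    (ϖ : k) (hϖ0 : 0 < ‖ϖ‖) (hϖ1 : ‖ϖ‖ < 1)
    (R₀ : Submodule (valuationSubring k) (DualNumber (LaurentPolynomial k)))
    (hR₀ : R₀ = Submodule.span (valuationSubring k)
      ((Set.range fun n : ℤ =>
          (ϖ ^ n.natAbs) • TrivSqZeroExt.inl (LaurentPolynomial.T n)) ∪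
       (Set.range fun n : ℤ =>
          ((ϖ⁻¹) ^ n.natAbs) •
            TrivSqZeroExt.inr (M := LaurentPolynomial k) (LaurentPolynomial.T n))))
    (Z : DualNumber (LaurentPolynomial k))
    (hZ : Z = TrivSqZeroExt.inr (M := LaurentPolynomial k) 1)
    (A₀ B₀ : Subring (DualNumber (LaurentPolynomial k)))
    (hA₀ : A₀ = Subring.closure
      ((R₀ : Set (DualNumber (LaurentPolynomial k))) ∪
        {TrivSqZeroExt.inl (LaurentPolynomial.T 1)}))
    (hB₀ : B₀ = Subring.closure
      ((R₀ : Set (DualNumber (LaurentPolynomial k))) ∪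
        {TrivSqZeroExt.inl (LaurentPolynomial.T (-1))})) :
    (∀ n : ℕ, (ϖ⁻¹) ^ n • Z ∈ A₀) ∧
    (∀ n : ℕ, (ϖ⁻¹) ^ n • Z ∈ B₀) ∧
    ϖ⁻¹ • Z ∉ R₀ ∧
    Z ∈ ⋂ n : ℕ, ϖ ^ n • (A₀ : Set (DualNumber (LaurentPolynomial k))) ∧
    Z ∈ ⋂ n : ℕ, ϖ ^ n • (B₀ : Set (DualNumber (LaurentPolynomial k))) ∧
    Z ∉ ⋂ n : ℕ, ϖ ^ n • (R₀ : Set (DualNumber (LaurentPolynomial k))) := by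
  subst hZ hA₀ hB₀
  have hϖ : ϖ ≠ 0 := norm_pos_iff.mp hϖ0
  have hgen : ∀ j : ℤ, ϖ⁻¹ ^ j.natAbs • inr (T j) ∈ R₀ := fun j =>
    hR₀ ▸ Submodule.subset_span (Or.inr ⟨j, rfl⟩)
  have hA : ∀ n : ℕ, ϖ⁻¹ ^ n • (inr 1 : DualNumber (LaurentPolynomial k)) ∈ Subring.closure ((R₀ : Set _) ∪ {inl (T 1)}) :=
    inv_pow_smul_inr_one_mem (m := 1) rfl (Subring.subset_closure (Or.inr rfl))
      fun j => Subring.subset_closure (Or.inl (hgen j))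
  have hB : ∀ n : ℕ, ϖ⁻¹ ^ n • (inr 1 : DualNumber (LaurentPolynomial k)) ∈ Subring.closure ((R₀ : Set _) ∪ {inl (T (-1))}) :=
    inv_pow_smul_inr_one_mem (m := -1) rfl (Subring.subset_closure (Or.inr rfl))
      fun j => Subring.subset_closure (Or.inl (hgen j))
  have hR : ϖ⁻¹ • inr 1 ∉ R₀ := hR₀ ▸ inv_smul_inr_one_notMem_span hϖ hϖ1
  refine ⟨hA, hB, hR, (mem_iInter_pow_smul_iff hϖ).2 hA, (mem_iInter_pow_smul_iff hϖ).2 hB,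
    fun h => hR ?_⟩
  simpa using (mem_iInter_pow_smul_iff hϖ).1 h 1

/-- With `R = k[T,T⁻¹,Z]/(Z²)` and `R₀` as in the Rost-style example, for
every `n ≥ 0` we have `ϖ⁻ⁿZ ∈ R₀[T]` and `ϖ⁻ⁿZ ∈ R₀[T⁻¹]`, but `ϖ⁻¹Z ∉ R₀`.
Consequently `Z` is zero in the completions with respect to `R₀[T]` and `R₀[T⁻¹]`
(i.e. `Z ∈ ⋂ₙ ϖⁿ·R₀[T]` and similarly for `T⁻¹`) but nonzero in the completion with
respect to `R₀` (i.e. `Z ∉ ⋂ₙ ϖⁿ·R₀`). -/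
theorem rost_example_not_sheaf
    (k : Type*) [NontriviallyNormedField k] [IsUltrametricDist k] [CompleteSpace k]
    (ϖ : k) (hϖ0 : 0 < ‖ϖ‖) (hϖ1 : ‖ϖ‖ < 1)
    (R₀ : Submodule (valuationSubring k) (DualNumber (LaurentPolynomial k)))
    (hR₀ : R₀ = Submodule.span (valuationSubring k)
      ((Set.range fun n : ℤ =>
          (ϖ ^ n.natAbs) • TrivSqZeroExt.inl (LaurentPolynomial.T n)) ∪
       (Set.range fun n : ℤ =>
          ((ϖ⁻¹) ^ n.natAbs) •
            TrivSqZeroExt.inr (M := LaurentPolynomial k) (LaurentPolynomial.T n))))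
    (Z : DualNumber (LaurentPolynomial k))
    (hZ : Z = TrivSqZeroExt.inr (M := LaurentPolynomial k) 1)
    (A₀ B₀ : Subring (DualNumber (LaurentPolynomial k)))
    (hA₀ : A₀ = Subring.closure
      ((R₀ : Set (DualNumber (LaurentPolynomial k))) ∪
        {TrivSqZeroExt.inl (LaurentPolynomial.T 1)}))
    (hB₀ : B₀ = Subring.closure
      ((R₀ : Set (DualNumber (LaurentPolynomial k))) ∪
        {TrivSqZeroExt.inl (LaurentPolynomial.T (-1))})) :
    (∀ n : ℕ, (ϖ⁻¹) ^ n • Z ∈ A₀) ∧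
    (∀ n : ℕ, (ϖ⁻¹) ^ n • Z ∈ B₀) ∧
    ϖ⁻¹ • Z ∉ R₀ ∧
    Z ∈ ⋂ n : ℕ, ϖ ^ n • (A₀ : Set (DualNumber (LaurentPolynomial k))) ∧
    Z ∈ ⋂ n : ℕ, ϖ ^ n • (B₀ : Set (DualNumber (LaurentPolynomial k))) ∧
    Z ∉ ⋂ n : ℕ, ϖ ^ n • (R₀ : Set (DualNumber (LaurentPolynomial k))) :=
  rost_example_not_sheaf_general k ϖ hϖ0 hϖ1 R₀ hR₀ Z hZ A₀ B₀ hA₀ hB₀
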